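/- Let H_Re and H_{I,1},…,H_{I,m} be Hermitian n×n complex matrices, let γ₁,…,γ_m > 0, Δt > 0, N ≥ 1, and T := N·Δt. Let μ be the product over (k,ℓ) ∈ {0,…,N−1}×{1,…,m} of the Gaussian measures gaussianReal 0 (2γ_ℓΔt), so a sample is ξ = (ξ_{k,ℓ}). For each k define U_k^{LT}(ξ) := exp((−i·Δt)•H_Re) * exp((−i)•∑_ℓ ξ_{k,ℓ}•H_{I,ℓ}) and U_k^{ex}(ξ) := exp((−i)•(Δt•H_Re + ∑_ℓ ξ_{k,ℓ}•H_{I,ℓ})). Then ∫ ‖U_{N−1}^{LT}(ξ)⋯U_0^{LT}(ξ) − U_{N−1}^{ex}(ξ)⋯U_0^{ex}(ξ)‖ dμ(ξ) ≤ T·∑_{ℓ=1}^{m} √(γ_ℓΔt/π)·‖[H_Re, H_{I,ℓ}]‖. -/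

import Mathlib

open scoped Matrix.Norms.L2Operator NNReal
open Matrix MeasureTheory ProbabilityTheory

/-!
Each Trotter factor `exp a * exp b` and each exact factor `exp (a + b)` is unitary (`a`, `b`
skew-adjoint), so the error of the `N`-step product telescopes into the sum of the one-step
errors. For one step, `K t = exp (-t (a + b)) * exp (t a) * exp (t b)` has derivative
`exp (-t (a + b)) * ⁅exp (t a), b⁆ * exp (t b)`, of norm at most `t ‖⁅a, b⁆‖` (conjugating `b`
by `exp (t a)` moves it at speed `‖⁅a, b⁆‖`), so `‖K 1 - 1‖ ≤ ‖⁅a, b⁆‖ / 2`.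
Here `⁅a, b⁆ = -Δt (∑ ℓ, ξ ℓ ⁅H_Re, H_I ℓ⁆)`, and the expectation of `|ξ|` under
`gaussianReal 0 v` is `√(2 v / π)`.
-/

section BanachAlgebra

open NormedSpace

variable {𝔸 : Type*} [NormedRing 𝔸] [NormedAlgebra ℚ 𝔸] [CompleteSpace 𝔸]

lemma exp_mul_exp_neg (x : 𝔸) : exp x * exp (-x) = 1 := by
  rw [← exp_add_of_commute (Commute.refl x).neg_right, add_neg_cancel, exp_zero]

lemma exp_neg_mul_exp (x : 𝔸) : exp (-x) * exp x = 1 := by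
  simpa using exp_mul_exp_neg (-x)

end BanachAlgebra

lemma norm_lie_sum_smul_le {𝕜 B ι : Type*} [NormedField 𝕜] [NormedRing B] [NormedAlgebra 𝕜 B]
    (s : Finset ι) (h : B) (g : ι → B) (ξ : ι → 𝕜) :
    ‖⁅h, ∑ ℓ ∈ s, ξ ℓ • g ℓ⁆‖ ≤ ∑ ℓ ∈ s, ‖ξ ℓ‖ * ‖⁅h, g ℓ⁆‖ := by
  have : ⁅h, ∑ ℓ ∈ s, ξ ℓ • g ℓ⁆ = ∑ ℓ ∈ s, ξ ℓ • ⁅h, g ℓ⁆ := by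
    simp only [Ring.lie_def, Finset.mul_sum, Finset.sum_mul, ← Finset.sum_sub_distrib,
      mul_smul_comm, smul_mul_assoc, smul_sub]
  rw [this]
  exact (norm_sum_le _ _).trans_eq (by simp only [norm_smul])

section CStarRing

variable {E : Type*} [NormedRing E] [StarRing E] [CStarRing E]

lemma norm_prod_map_sub_prod_map_le {ι : Type*} (l : List ι) {u v : ι → E}
    (hu : ∀ i ∈ l, u i ∈ unitary E) (hv : ∀ i ∈ l, v i ∈ unitary E) :
    ‖(l.map u).prod - (l.map v).prod‖ ≤ (l.map fun i => ‖u i - v i‖).sum := by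
  induction l with
  | nil => simp
  | cons i l ih =>
    simp only [List.forall_mem_cons] at hu hv
    set P := (l.map u).prod
    set Q := (l.map v).prod
    have hQ : Q ∈ unitary E := Submonoid.list_prod_mem _ (by simpa using hv.2)
    calc ‖u i * P - v i * Q‖ = ‖u i * (P - Q) + (u i - v i) * Q‖ := by noncomm_ring
      _ ≤ ‖u i * (P - Q)‖ + ‖(u i - v i) * Q‖ := norm_add_le _ _
      _ = ‖P - Q‖ + ‖u i - v i‖ := by
        rw [CStarRing.norm_mem_unitary_mul _ hu.1, CStarRing.norm_mul_mem_unitary _ hQ]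
      _ ≤ (l.map fun i => ‖u i - v i‖).sum + ‖u i - v i‖ := by grw [ih hu.2 hv.2]
      _ = ((i :: l).map fun i => ‖u i - v i‖).sum := by simp [add_comm]

end CStarRing

section CStarAlgebra

open NormedSpace

variable {A : Type*} [CStarAlgebra A] {a b : A}

lemma exp_smul_mem_unitary (ha : a ∈ skewAdjoint A) (t : ℝ) : exp (t • a) ∈ unitary A :=
  -- the exponential lemmas are stated for `ℚ`-algebras, an instance a `CStarAlgebra` lacks
  let : NormedAlgebra ℚ A := .restrictScalars ℚ ℂ A
  exp_mem_unitary_of_mem_skewAdjoint (skewAdjoint.smul_mem t ha)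

lemma norm_lie_exp_smul_le (ha : a ∈ skewAdjoint A) (b : A) (t : ℝ) :
    ‖⁅exp (t • a), b⁆‖ ≤ |t| * ‖⁅a, b⁆‖ := by
  let : NormedAlgebra ℚ A := .restrictScalars ℚ ℂ A
  have ha' : -a ∈ skewAdjoint A := neg_mem ha
  set L : ℝ → A := fun s => exp (s • a) * b * exp (s • -a)
  have hL : ∀ s, HasDerivAt L (exp (s • a) * ⁅a, b⁆ * exp (s • -a)) s := by
    intro s
    refine (((hasDerivAt_exp_smul_const a s).mul_const b).mul
      (hasDerivAt_exp_smul_const' (-a) s)).congr_deriv ?_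
    rw [Ring.lie_def]
    noncomm_ring
  have hL' : ∀ s, ‖exp (s • a) * ⁅a, b⁆ * exp (s • -a)‖ = ‖⁅a, b⁆‖ := fun s => by
    rw [CStarRing.norm_mul_mem_unitary _ (exp_smul_mem_unitary ha' s),
      CStarRing.norm_mem_unitary_mul _ (exp_smul_mem_unitary ha s)]
  have hLip : ‖L t - L 0‖ ≤ ‖⁅a, b⁆‖ * ‖t - 0‖ :=
    convex_univ.norm_image_sub_le_of_norm_hasDerivWithin_le
      (fun s _ => (hL s).hasDerivWithinAt) (fun s _ => (hL' s).le) trivial trivial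
  have hlie : ⁅exp (t • a), b⁆ = (L t - L 0) * exp (t • a) := by
    simp only [L, Ring.lie_def, zero_smul, neg_zero, exp_zero, one_mul, smul_neg, mul_assoc,
      exp_neg_mul_exp, mul_one, sub_mul]
  rw [hlie, CStarRing.norm_mul_mem_unitary _ (exp_smul_mem_unitary ha t)]
  simpa [mul_comm] using hLip

lemma norm_exp_mul_exp_sub_exp_add_le (ha : a ∈ skewAdjoint A) (hb : b ∈ skewAdjoint A) :
    ‖exp a * exp b - exp (a + b)‖ ≤ ‖⁅a, b⁆‖ / 2 := by
  let : NormedAlgebra ℚ A := .restrictScalars ℚ ℂ A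
  set c := a + b
  have hc : -c ∈ skewAdjoint A := neg_mem (add_mem ha hb)
  set K : ℝ → A := fun t => exp (t • -c) * (exp (t • a) * exp (t • b)) - 1
  set K' : ℝ → A := fun t => exp (t • -c) * ⁅exp (t • a), b⁆ * exp (t • b)
  have hK : ∀ t, HasDerivAt K (K' t) t := by
    intro t
    refine (((hasDerivAt_exp_smul_const (-c) t).mul ((hasDerivAt_exp_smul_const' a t).mul
      (hasDerivAt_exp_smul_const' b t))).sub_const 1).congr_deriv ?_
    simp only [K', Ring.lie_def, c, Pi.mul_apply]
    noncomm_ring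
  have hK' : ∀ t ∈ Set.Ico (0 : ℝ) 1, ‖K' t‖ ≤ t * ‖⁅a, b⁆‖ := fun t ht => by
    rw [CStarRing.norm_mul_mem_unitary _ (exp_smul_mem_unitary hb t),
      CStarRing.norm_mem_unitary_mul _ (exp_smul_mem_unitary hc t)]
    simpa [abs_of_nonneg ht.1] using norm_lie_exp_smul_le ha b t
  have hB : ∀ t : ℝ, HasDerivAt (fun t => t ^ 2 / 2 * ‖⁅a, b⁆‖) (t * ‖⁅a, b⁆‖) t := fun t => by
    simpa using ((hasDerivAt_pow 2 t).div_const 2).mul_const ‖⁅a, b⁆‖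
  have hK1 : ‖K 1‖ ≤ 1 ^ 2 / 2 * ‖⁅a, b⁆‖ :=
    image_norm_le_of_norm_deriv_right_le_deriv_boundary
      (fun t _ => (hK t).continuousAt.continuousWithinAt) (fun t _ => (hK t).hasDerivWithinAt)
      (by simp [K]) hB hK' (Set.right_mem_Icc.2 zero_le_one)
  have hexp : exp a * exp b - exp c = exp c * K 1 := by
    simp only [K, one_smul, mul_sub, ← mul_assoc, smul_neg, exp_mul_exp_neg, one_mul, mul_one]
  rw [hexp, CStarRing.norm_mem_unitary_mul _ (exp_mem_unitary_of_mem_skewAdjoint (add_mem ha hb))]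
  exact hK1.trans_eq (by ring)

lemma isSelfAdjoint_sum_smul {ι : Type*} (s : Finset ι) {g : ι → A}
    (hg : ∀ ℓ, IsSelfAdjoint (g ℓ)) (ξ : ι → ℝ) : IsSelfAdjoint (∑ ℓ ∈ s, ξ ℓ • g ℓ) :=
  isSelfAdjoint_sum _ fun ℓ _ => (IsSelfAdjoint.all (ξ ℓ)).smul (hg ℓ)

lemma exp_smul_mem_unitary_of_isSelfAdjoint {z : ℂ} (hz : z ∈ skewAdjoint ℂ) {x : A}
    (hx : IsSelfAdjoint x) : exp (z • x) ∈ unitary A :=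
  let : NormedAlgebra ℚ A := .restrictScalars ℚ ℂ A
  exp_mem_unitary_of_mem_skewAdjoint (hx.smul_mem_skewAdjoint hz)

open Complex

lemma neg_I_mul_ofReal_mem_skewAdjoint (τ : ℝ) : -I * τ ∈ skewAdjoint ℂ := by
  simp [skewAdjoint.mem_iff]

variable {ι : Type*} [Fintype ι]

noncomputable def lieTrotterStep (h : A) (g : ι → A) (τ : ℝ) (ξ : ι → ℝ) : A :=
  exp ((-I * τ) • h) * exp ((-I) • ∑ ℓ, ξ ℓ • g ℓ)

noncomputable def exactStep (h : A) (g : ι → A) (τ : ℝ) (ξ : ι → ℝ) : A :=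
  exp ((-I) • (τ • h + ∑ ℓ, ξ ℓ • g ℓ))

variable {h : A} {g : ι → A}

lemma lieTrotterStep_mem_unitary (hh : IsSelfAdjoint h) (hg : ∀ ℓ, IsSelfAdjoint (g ℓ))
    (τ : ℝ) (ξ : ι → ℝ) : lieTrotterStep h g τ ξ ∈ unitary A :=
  mul_mem (exp_smul_mem_unitary_of_isSelfAdjoint (neg_I_mul_ofReal_mem_skewAdjoint τ) hh)
    (exp_smul_mem_unitary_of_isSelfAdjoint (neg_mem I_mem_skewAdjoint)
      (isSelfAdjoint_sum_smul _ hg ξ))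

lemma exactStep_mem_unitary (hh : IsSelfAdjoint h) (hg : ∀ ℓ, IsSelfAdjoint (g ℓ))
    (τ : ℝ) (ξ : ι → ℝ) : exactStep h g τ ξ ∈ unitary A :=
  exp_smul_mem_unitary_of_isSelfAdjoint (neg_mem I_mem_skewAdjoint)
    (((IsSelfAdjoint.all τ).smul hh).add (isSelfAdjoint_sum_smul _ hg ξ))

lemma norm_lieTrotterStep_sub_exactStep_le (hh : IsSelfAdjoint h) (hg : ∀ ℓ, IsSelfAdjoint (g ℓ))
    (τ : ℝ) (ξ : ι → ℝ) :
    ‖lieTrotterStep h g τ ξ - exactStep h g τ ξ‖ ≤ ∑ ℓ, |τ| / 2 * ‖⁅h, g ℓ⁆‖ * |ξ ℓ| := by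
  set s := ∑ ℓ, ξ ℓ • g ℓ
  have hs : IsSelfAdjoint s := isSelfAdjoint_sum_smul _ hg ξ
  have hsum : (-I) • (τ • h + s) = (-I * τ) • h + (-I) • s := by
    rw [smul_add, mul_smul, coe_smul]
  have hlie : ⁅(-I * τ) • h, (-I) • s⁆ = (-τ : ℂ) • ⁅h, s⁆ := by
    have hc : -I * τ * -I = (-τ : ℂ) := by linear_combination (τ : ℂ) * I_sq
    rw [Ring.lie_def, Ring.lie_def, smul_mul_smul_comm, smul_mul_smul_comm,
      mul_comm (-I) (-I * τ), hc, ← smul_sub]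
  rw [lieTrotterStep, exactStep, hsum]
  calc _ ≤ ‖⁅(-I * τ) • h, (-I) • s⁆‖ / 2 :=
        norm_exp_mul_exp_sub_exp_add_le
          (hh.smul_mem_skewAdjoint (neg_I_mul_ofReal_mem_skewAdjoint τ))
          (hs.smul_mem_skewAdjoint (neg_mem I_mem_skewAdjoint))
    _ = |τ| / 2 * ‖⁅h, s⁆‖ := by rw [hlie, norm_smul, norm_neg, norm_real, Real.norm_eq_abs]; ring
    _ ≤ ∑ ℓ, |τ| / 2 * ‖⁅h, g ℓ⁆‖ * |ξ ℓ| := by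
        grw [norm_lie_sum_smul_le, Finset.mul_sum]
        exact (Finset.sum_congr rfl fun ℓ _ => by rw [Real.norm_eq_abs]; ring).le

lemma norm_prod_lieTrotterStep_sub_prod_exactStep_le (hh : IsSelfAdjoint h)
    (hg : ∀ ℓ, IsSelfAdjoint (g ℓ)) (τ : ℝ) {N : ℕ} (ξ : Fin N → ι → ℝ) :
    ‖(List.ofFn fun k => lieTrotterStep h g τ (ξ k)).reverse.prod -
        (List.ofFn fun k => exactStep h g τ (ξ k)).reverse.prod‖ ≤
      ∑ k, ∑ ℓ, |τ| / 2 * ‖⁅h, g ℓ⁆‖ * |ξ k ℓ| := by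
  have := norm_prod_map_sub_prod_map_le (List.finRange N).reverse
    (u := fun k => lieTrotterStep h g τ (ξ k)) (v := fun k => exactStep h g τ (ξ k))
    (fun k _ => lieTrotterStep_mem_unitary hh hg τ (ξ k))
    (fun k _ => exactStep_mem_unitary hh hg τ (ξ k))
  simp only [List.map_reverse, List.sum_reverse, ← List.ofFn_eq_map, List.sum_ofFn] at this
  exact this.trans (Finset.sum_le_sum fun k _ => norm_lieTrotterStep_sub_exactStep_le hh hg τ (ξ k))

end CStarAlgebra

section Gaussian

open Real

lemma integral_Ioi_mul_exp_neg_mul_sq {b : ℝ} (hb : 0 < b) :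
    ∫ r in Set.Ioi (0 : ℝ), r * exp (-b * r ^ 2) = (2 * b)⁻¹ := by
  apply Complex.ofReal_injective
  rw [← integral_complex_ofReal]
  push_cast
  exact integral_mul_cexp_neg_mul_sq (by simpa using hb)

lemma integral_abs_gaussianReal (v : ℝ≥0) : ∫ x, |x| ∂gaussianReal 0 v = √(2 * v / π) := by
  rcases eq_or_ne v 0 with rfl | hv
  · simp [gaussianReal_zero_var]
  have hv' : (0 : ℝ) < v := by positivity
  calc ∫ x, |x| ∂gaussianReal 0 v
      = (√(2 * π * v))⁻¹ * ∫ x, |x| * exp (-(2 * (v : ℝ))⁻¹ * |x| ^ 2) := by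
        rw [integral_gaussianReal_eq_integral_smul hv, ← integral_const_mul]
        congr with x
        simp only [gaussianPDFReal, sub_zero, sq_abs, smul_eq_mul]
        ring_nf
    _ = (√(2 * π * v))⁻¹ * (2 * v) := by
        rw [integral_comp_abs (f := fun r => r * exp (-(2 * (v : ℝ))⁻¹ * r ^ 2)),
          integral_Ioi_mul_exp_neg_mul_sq (by positivity)]
        field_simp
    _ = √(2 * v / π) := by
        rw [show 2 * π * v = π * (2 * v) by ring, sqrt_mul pi_pos.le, sqrt_div' _ pi_pos.le]
        field_simp
        rw [sq_sqrt (by positivity)]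

end Gaussian

lemma measurePreserving_eval_eval {ι κ X : Type*} [Fintype ι] [Fintype κ] [MeasurableSpace X]
    (ν : κ → Measure X) [∀ ℓ, IsProbabilityMeasure (ν ℓ)] (k : ι) (ℓ : κ) :
    MeasurePreserving (fun ξ : ι → κ → X => ξ k ℓ) (Measure.pi fun _ => Measure.pi ν) (ν ℓ) :=
  (measurePreserving_eval ν ℓ).comp (measurePreserving_eval (fun _ => Measure.pi ν) k)

section GaussianNoise

variable (ι : Type*) {κ : Type*} [Fintype ι] [Fintype κ] (v : κ → ℝ≥0)

noncomputable def gaussianNoise : Measure (ι → κ → ℝ) :=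
  Measure.pi fun _ : ι => Measure.pi fun ℓ => gaussianReal 0 (v ℓ)

variable {ι}

lemma integrable_abs_apply_apply_gaussianNoise (k : ι) (ℓ : κ) :
    Integrable (fun ξ : ι → κ → ℝ => |ξ k ℓ|) (gaussianNoise ι v) :=
  (measurePreserving_eval_eval (fun ℓ => gaussianReal 0 (v ℓ)) k ℓ).integrable_comp_of_integrable
    (g := fun x => |x|) ((memLp_id_gaussianReal 1).integrable le_rfl).abs

lemma integral_abs_apply_apply_gaussianNoise (k : ι) (ℓ : κ) :
    ∫ ξ, |ξ k ℓ| ∂gaussianNoise ι v = √(2 * v ℓ / Real.pi) := by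
  have hmp : MeasurePreserving (fun ξ : ι → κ → ℝ => ξ k ℓ) (gaussianNoise ι v) _ :=
    measurePreserving_eval_eval _ k ℓ
  rw [← integral_map hmp.measurable.aemeasurable
      (hmp.map_eq ▸ continuous_abs.aestronglyMeasurable), hmp.map_eq, integral_abs_gaussianReal]

lemma integrable_sum_sum_mul_abs_gaussianNoise (c : κ → ℝ) :
    Integrable (fun ξ : ι → κ → ℝ => ∑ k, ∑ ℓ, c ℓ * |ξ k ℓ|) (gaussianNoise ι v) :=
  integrable_finsetSum _ fun k _ => integrable_finsetSum _ fun ℓ _ =>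
    (integrable_abs_apply_apply_gaussianNoise v k ℓ).const_mul _

lemma integral_sum_sum_mul_abs_gaussianNoise (c : κ → ℝ) :
    ∫ ξ, ∑ k, ∑ ℓ, c ℓ * |ξ k ℓ| ∂gaussianNoise ι v =
      Fintype.card ι * ∑ ℓ, c ℓ * √(2 * v ℓ / Real.pi) := by
  rw [integral_finsetSum _ fun k _ => integrable_finsetSum _ fun ℓ _ =>
    (integrable_abs_apply_apply_gaussianNoise v k ℓ).const_mul _]
  simp_rw [integral_finsetSum _ fun ℓ _ =>
    (integrable_abs_apply_apply_gaussianNoise v _ ℓ).const_mul _, integral_const_mul,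
    integral_abs_apply_apply_gaussianNoise]
  simp

end GaussianNoise

theorem lie_trotter_Nstep_expectation_bound_general {n : Type*} [Fintype n] [DecidableEq n]
    (m N : ℕ)
    (HRe : Matrix n n ℂ) (HI : Fin m → Matrix n n ℂ)
    (hRe : HRe.IsHermitian) (hI : ∀ ℓ, (HI ℓ).IsHermitian)
    (γ : Fin m → ℝ) (hγ : ∀ ℓ, 0 < γ ℓ) (Δt : ℝ) (hΔt : 0 < Δt)
    (T : ℝ) (hT : T = N * Δt)
    (μ : Measure (Fin N → Fin m → ℝ))
    (hμ : μ = Measure.pi fun _ : Fin N =>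
      Measure.pi fun ℓ : Fin m => gaussianReal 0 (2 * γ ℓ * Δt).toNNReal)
    (ULT Uex : Fin N → (Fin N → Fin m → ℝ) → Matrix n n ℂ)
    (hULT : ∀ k ξ, ULT k ξ =
      NormedSpace.exp (((-Complex.I) * (Δt : ℂ)) • HRe) *
        NormedSpace.exp ((-Complex.I) • (∑ ℓ, ξ k ℓ • HI ℓ)))
    (hUex : ∀ k ξ, Uex k ξ =
      NormedSpace.exp ((-Complex.I) • (Δt • HRe + ∑ ℓ, ξ k ℓ • HI ℓ))) :
    (∫ ξ, ‖((List.ofFn fun k => ULT k ξ).reverse).prod -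
        ((List.ofFn fun k => Uex k ξ).reverse).prod‖ ∂μ) ≤
      T * ∑ ℓ, Real.sqrt (γ ℓ * Δt / Real.pi) * ‖HRe * HI ℓ - HI ℓ * HRe‖ := by
  obtain rfl : ULT = fun k ξ => lieTrotterStep HRe HI Δt (ξ k) := funext₂ hULT
  obtain rfl : Uex = fun k ξ => exactStep HRe HI Δt (ξ k) := funext₂ hUex
  obtain rfl : μ = gaussianNoise (Fin N) fun ℓ => (2 * γ ℓ * Δt).toNNReal := hμ
  have hvar : ∀ ℓ, √(2 * (2 * γ ℓ * Δt).toNNReal / Real.pi) = 2 * √(γ ℓ * Δt / Real.pi) :=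
    fun ℓ => by
      rw [Real.coe_toNNReal _ (by have := hγ ℓ; positivity),
        show 2 * (2 * γ ℓ * Δt) / Real.pi = 2 ^ 2 * (γ ℓ * Δt / Real.pi) by ring,
        Real.sqrt_mul (by positivity), Real.sqrt_sq zero_le_two]
  have hpointwise := norm_prod_lieTrotterStep_sub_prod_exactStep_le (N := N)
    (isHermitian_iff_isSelfAdjoint.1 hRe) (fun ℓ => isHermitian_iff_isSelfAdjoint.1 (hI ℓ)) Δt
  calc _ ≤ ∫ ξ, ∑ k, ∑ ℓ, |Δt| / 2 * ‖⁅HRe, HI ℓ⁆‖ * |ξ k ℓ|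
        ∂gaussianNoise (Fin N) fun ℓ => (2 * γ ℓ * Δt).toNNReal :=
        integral_mono_of_nonneg (ae_of_all _ fun _ => norm_nonneg _)
          (integrable_sum_sum_mul_abs_gaussianNoise _ _) (ae_of_all _ hpointwise)
    _ = T * ∑ ℓ, √(γ ℓ * Δt / Real.pi) * ‖HRe * HI ℓ - HI ℓ * HRe‖ := by
        rw [integral_sum_sum_mul_abs_gaussianNoise, Fintype.card_fin, hT, Finset.mul_sum,
          Finset.mul_sum]
        refine Finset.sum_congr rfl fun ℓ _ => ?_
        rw [hvar, abs_of_pos hΔt, Ring.lie_def]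
        ring

/-- N-step ensemble-averaged Lie–Trotter accumulation bound
(Theorem SM prop:LT_scaling_Nstep). The ordered product `U_{N-1} ⋯ U_0` is
represented as `((List.ofFn U).reverse).prod`. -/
theorem lie_trotter_Nstep_expectation_bound {n : Type*} [Fintype n] [DecidableEq n] [Nonempty n]
    (m N : ℕ) (hN : 1 ≤ N)
    (HRe : Matrix n n ℂ) (HI : Fin m → Matrix n n ℂ)
    (hRe : HRe.IsHermitian) (hI : ∀ ℓ, (HI ℓ).IsHermitian)
    (γ : Fin m → ℝ) (hγ : ∀ ℓ, 0 < γ ℓ) (Δt : ℝ) (hΔt : 0 < Δt)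
    (T : ℝ) (hT : T = N * Δt)
    (μ : Measure (Fin N → Fin m → ℝ))
    (hμ : μ = Measure.pi fun _ : Fin N =>
      Measure.pi fun ℓ : Fin m => gaussianReal 0 (2 * γ ℓ * Δt).toNNReal)
    (ULT Uex : Fin N → (Fin N → Fin m → ℝ) → Matrix n n ℂ)
    (hULT : ∀ k ξ, ULT k ξ =
      NormedSpace.exp (((-Complex.I) * (Δt : ℂ)) • HRe) *
        NormedSpace.exp ((-Complex.I) • (∑ ℓ, ξ k ℓ • HI ℓ)))
    (hUex : ∀ k ξ, Uex k ξ =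
      NormedSpace.exp ((-Complex.I) • (Δt • HRe + ∑ ℓ, ξ k ℓ • HI ℓ))) :
    (∫ ξ, ‖((List.ofFn fun k => ULT k ξ).reverse).prod -
        ((List.ofFn fun k => Uex k ξ).reverse).prod‖ ∂μ) ≤
      T * ∑ ℓ, Real.sqrt (γ ℓ * Δt / Real.pi) * ‖HRe * HI ℓ - HI ℓ * HRe‖ :=
  lie_trotter_Nstep_expectation_bound_general m N HRe HI hRe hI γ hγ Δt hΔt T hT μ hμ ULT Uex hULT
    hUex
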